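/- The quiver associated with the 'double wheel' triangulation of a once-punctured m-gon (puncture joined to all m boundary vertices) is an oriented chordless m-cycle, and imposing relations (R1)-(R3) on it, the element (s_1 s_2 ⋯ s_{m-1} s_m s_{m-1} ⋯ s_2)² is central of order dividing 2 in the quotient group; in particular in the group G with generators s_1,…,s_m, relations s_i² = e, (s_is_{i+1})³ = e (indices mod m), (s_is_j)² = e for non-adjacent i,j, and r := (s_1⋯s_{m-1}s_m s_{m-1}⋯s_2)², the element r equals the identity and hence the cyclically shifted relation (s_2⋯s_m s_1 s_m⋯s_3)² = e also holds. -/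
import Mathlib


namespace CycleRelation

variable (m : ℕ)

/-- The cycle word `s₁ s₂ ⋯ s_{m-1} s_m s_{m-1} ⋯ s₂` (generators indexed by
`ZMod m`, with `s_j` corresponding to index `j - 1`). -/
def cycleWord : FreeGroup (ZMod m) :=
  ((List.range m).map (fun i => FreeGroup.of ((i : ZMod m)))).prod *
  ((List.range (m - 2)).map (fun i => FreeGroup.of (((m - 2 - i : ℕ) : ZMod m)))).prod

/-- Relators (R1)–(R3) for the quiver which is an oriented chordless `m`-cycle
(the quiver of the 'double wheel' triangulation of a once-punctured `m`-gon):
`sᵢ² = 1`, `(sᵢ s_{i+1})³ = 1` (indices mod `m`), `(sᵢ sⱼ)² = 1` for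
non-adjacent `i, j`, together with the cycle relation `(s₁⋯s_{m-1} s_m s_{m-1}⋯s₂)²`. -/
def rels : Set (FreeGroup (ZMod m)) :=
  {r | ∃ i : ZMod m, r = (FreeGroup.of i) ^ 2} ∪
  {r | ∃ i : ZMod m, r = (FreeGroup.of i * FreeGroup.of (i + 1)) ^ 3} ∪
  {r | ∃ i j : ZMod m, j ≠ i ∧ j ≠ i + 1 ∧ j ≠ i - 1 ∧
    r = (FreeGroup.of i * FreeGroup.of j) ^ 2} ∪
  {cycleWord m ^ 2}

/-- The group `G` presented by the relations (R1)–(R3)' of the oriented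
chordless `m`-cycle quiver, including the square of the cycle word. -/
def G : Type := PresentedGroup (rels m)

instance : Group (G m) := by unfold G; infer_instance

/-- The image of the generator indexed by `i` in `G`. -/
def σ (i : ZMod m) : G m := PresentedGroup.of i

-- Auxiliary machinery for the proof
def homG : FreeGroup (ZMod m) →* G m :=
  (QuotientGroup.mk' (Subgroup.normalClosure (rels m)) :
    FreeGroup (ZMod m) →* PresentedGroup (rels m))

lemma homG_of (i : ZMod m) : homG m (FreeGroup.of i) = σ m i := rfl

lemma homG_rel {m : ℕ} {r : FreeGroup (ZMod m)} (h : r ∈ rels m) : homG m r = 1 :=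
  (QuotientGroup.eq_one_iff r).mpr (Subgroup.subset_normalClosure h)

section Aux
variable {m}

lemma sq_rel (i : ZMod m) : σ m i * σ m i = 1 := by
  have h := homG_rel (m := m) (r := (FreeGroup.of i) ^ 2)
    (Set.mem_union_left _ (Set.mem_union_left _ (Set.mem_union_left _ ⟨i, rfl⟩)))
  simpa [pow_two, homG_of] using h

lemma braid_rel (i : ZMod m) :
    σ m i * σ m (i + 1) * σ m i = σ m (i + 1) * σ m i * σ m (i + 1) := by
  have h := homG_rel (m := m) (r := (FreeGroup.of i * FreeGroup.of (i + 1)) ^ 3)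
    (Set.mem_union_left _ (Set.mem_union_left _ (Set.mem_union_right _ ⟨i, rfl⟩)))
  set u := σ m i
  set v := σ m (i + 1)
  have hu : u * u = 1 := sq_rel i
  have hv : v * v = 1 := sq_rel (i + 1)
  have h3 : u * v * u * (v * u * v) = 1 := by
    have h' : (u * v) ^ 3 = 1 := by
      simpa [homG_of, map_pow] using h
    calc u * v * u * (v * u * v) = (u * v) ^ 3 := by
          rw [pow_succ, pow_succ, pow_one]; group
    _ = 1 := h'
  have he := eq_inv_of_mul_eq_one_left h3
  rw [he, mul_inv_rev, mul_inv_rev,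
    inv_eq_of_mul_eq_one_right hu, inv_eq_of_mul_eq_one_right hv]
  group

lemma comm_rel {i j : ZMod m} (h1 : j ≠ i) (h2 : j ≠ i + 1) (h3 : j ≠ i - 1) :
    σ m i * σ m j = σ m j * σ m i := by
  have h := homG_rel (m := m) (r := (FreeGroup.of i * FreeGroup.of j) ^ 2)
    (Set.mem_union_left _ (Set.mem_union_right _ ⟨i, j, h1, h2, h3, rfl⟩))
  have h2' : (σ m i * σ m j) * (σ m i * σ m j) = 1 := by
    have h' : (σ m i * σ m j) ^ 2 = 1 := by simpa [homG_of, map_pow] using h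
    simpa [pow_two] using h'
  have he := eq_inv_of_mul_eq_one_left h2'
  rw [he, mul_inv_rev, inv_eq_of_mul_eq_one_right (sq_rel i),
    inv_eq_of_mul_eq_one_right (sq_rel j)]

lemma cyc_rel : homG m (cycleWord m) * homG m (cycleWord m) = 1 := by
  have h := homG_rel (m := m) (r := cycleWord m ^ 2)
    (Set.mem_union_right _ (Set.mem_singleton _))
  rw [map_pow, pow_two] at h
  exact h

private lemma coe_list_range {m n : ℕ} :
    (do let a ← List.range n; pure ((a : ZMod m))) = (List.range n).map (Nat.cast) := by
  simp only [List.pure_def, List.bind_eq_flatMap]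
  exact List.flatMap_pure_eq_map _ _

private lemma natCast_ne {n a b : ℕ} [NeZero n] (ha : a < n) (hb : b < n) (h : a ≠ b) :
    (a : ZMod n) ≠ (b : ZMod n) := fun he => h (by
  rw [← ZMod.val_cast_of_lt ha, ← ZMod.val_cast_of_lt hb, he])

private lemma key_alg {H : Type*} [Group H] (x y z M N : H)
    (hy : y * y = 1) (hz : z * z = 1)
    (b1 : x * y * x = y * x * y) (b2 : z * x * z = x * z * x)
    (cM : x * M = M * x) (cN : x * N = N * x)
    (hw : (x * (y * (M * (z * (N * y))))) ^ 2 = 1) :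
    (y * (M * (z * (x * (z * N))))) ^ 2 = 1 := by
  have Y : ∀ r : H, y * (y * r) = r := fun r => by rw [← mul_assoc, hy, one_mul]
  have Z : ∀ r : H, z * (z * r) = r := fun r => by rw [← mul_assoc, hz, one_mul]
  have B1 : ∀ r : H, y * (x * (y * r)) = x * (y * (x * r)) := fun r => by
    rw [← mul_assoc, ← mul_assoc, ← b1, mul_assoc, mul_assoc]
  have B2 : ∀ r : H, x * (z * (x * r)) = z * (x * (z * r)) := fun r => by
    rw [← mul_assoc, ← mul_assoc, ← b2, mul_assoc, mul_assoc]
  have CM : ∀ r : H, x * (M * r) = M * (x * r) := fun r => by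
    rw [← mul_assoc, cM, mul_assoc]
  have key : y * (x * (y * (M * (z * (x * (z * N))))))
      = (x * (y * (M * (z * (N * y))))) * (y * x) := by
    calc y * (x * (y * (M * (z * (x * (z * N))))))
        = x * (y * (x * (M * (z * (x * (z * N)))))) := B1 _
      _ = x * (y * (M * (x * (z * (x * (z * N)))))) := by rw [CM]
      _ = x * (y * (M * (z * (x * (z * (z * N)))))) := by rw [B2]
      _ = x * (y * (M * (z * (x * N)))) := by rw [Z]
      _ = x * (y * (M * (z * (N * x)))) := by rw [cN]
      _ = (x * (y * (M * (z * (N * y))))) * (y * x) := by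
          simp only [mul_assoc]; rw [Y]
  have h1 : y * (M * (z * (x * (z * N))))
      = (y * x)⁻¹ * ((x * (y * (M * (z * (N * y))))) * (y * x)) := by
    rw [← key]; group
  calc (y * (M * (z * (x * (z * N))))) ^ 2
      = (y * x)⁻¹ * ((x * (y * (M * (z * (N * y))))) ^ 2 * (y * x)) := by
        rw [h1, pow_two, pow_two]; group
    _ = 1 := by rw [hw, one_mul, inv_mul_cancel]

end Aux

/-- In the group of the oriented chordless `m`-cycle quiver with relations
(R1)–(R3), the cyclically shifted cycle relation
`(s₂ s₃ ⋯ s_m s₁ s_m ⋯ s₃)² = 1` also holds: the cycle relation does not depend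
on the chosen starting vertex of the cycle. -/
theorem shifted_cycle_relation (hm : 3 ≤ m) :
    ((((List.range m).map (fun i => σ m ((i : ZMod m) + 1))).prod *
      (((List.range (m - 2)).map
        (fun i => σ m (((m - 2 - i : ℕ) : ZMod m) + 1))).prod)) ^ 2 : G m) = 1 := by
  obtain ⟨k, rfl⟩ : ∃ k, m = k + 3 := ⟨m - 3, by omega⟩
  clear hm
  haveI : NeZero (k + 3) := ⟨by omega⟩
  rw [coe_list_range, List.map_map]
  show ((((List.range (k + 3)).map (fun i : ℕ => σ (k + 3) ((i : ZMod (k + 3)) + 1))).prod *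
      (((List.range (k + 1)).map
        (fun i : ℕ => σ (k + 3) (((k + 1 - i : ℕ) : ZMod (k + 3)) + 1))).prod)) ^ 2 :
        G (k + 3)) = 1
  -- cast facts
  have e20 : ((k + 2 : ℕ) : ZMod (k + 3)) + 1 = 0 := by
    have h := ZMod.natCast_self (k + 3)
    push_cast at h ⊢
    linear_combination h
  have e12 : ((k + 1 : ℕ) : ZMod (k + 3)) + 1 = ((k + 2 : ℕ) : ZMod (k + 3)) := by
    push_cast; ring
  have e01 : ((0 : ℕ) : ZMod (k + 3)) + 1 = 1 := by norm_num
  have eneg : ((k + 2 : ℕ) : ZMod (k + 3)) = -1 := eq_neg_of_add_eq_zero_left e20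
  -- relations
  have hy : σ (k + 3) 1 * σ (k + 3) 1 = 1 := sq_rel _
  have hz : σ (k + 3) ((k + 2 : ℕ) : ZMod (k + 3)) *
      σ (k + 3) ((k + 2 : ℕ) : ZMod (k + 3)) = 1 := sq_rel _
  have b1 : σ (k + 3) 0 * σ (k + 3) 1 * σ (k + 3) 0
      = σ (k + 3) 1 * σ (k + 3) 0 * σ (k + 3) 1 := by
    have h := braid_rel (m := k + 3) 0
    rw [zero_add] at h; exact h
  have b2 : σ (k + 3) ((k + 2 : ℕ) : ZMod (k + 3)) * σ (k + 3) 0 *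
        σ (k + 3) ((k + 2 : ℕ) : ZMod (k + 3))
      = σ (k + 3) 0 * σ (k + 3) ((k + 2 : ℕ) : ZMod (k + 3)) * σ (k + 3) 0 := by
    have h := braid_rel (m := k + 3) ((k + 2 : ℕ) : ZMod (k + 3))
    rw [e20] at h; exact h
  have hcomm0 : ∀ j : ZMod (k + 3), j ≠ 0 → j ≠ 1 → j ≠ -1 →
      σ (k + 3) 0 * σ (k + 3) j = σ (k + 3) j * σ (k + 3) 0 := by
    intro j h1 h2 h3
    exact comm_rel h1 (by simpa using h2) (by simpa using h3)
  -- middle products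
  have cM : σ (k + 3) 0 *
        ((List.range k).map (fun i : ℕ => σ (k + 3) ((i + 2 : ℕ) : ZMod (k + 3)))).prod
      = ((List.range k).map (fun i : ℕ => σ (k + 3) ((i + 2 : ℕ) : ZMod (k + 3)))).prod *
        σ (k + 3) 0 := by
    refine Commute.list_prod_right _ _ ?_
    intro g hg
    simp only [List.mem_map, List.mem_range] at hg
    obtain ⟨i, hik, rfl⟩ := hg
    refine hcomm0 _ ?_ ?_ ?_
    · simpa using natCast_ne (n := k + 3) (a := i + 2) (b := 0)
        (by omega) (by omega) (by omega)
    · simpa using natCast_ne (n := k + 3) (a := i + 2) (b := 1)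
        (by omega) (by omega) (by omega)
    · rw [← eneg]
      exact natCast_ne (by omega) (by omega) (by omega)
  have cN : σ (k + 3) 0 *
        ((List.range k).map (fun i : ℕ => σ (k + 3) ((k + 1 - i : ℕ) : ZMod (k + 3)))).prod
      = ((List.range k).map (fun i : ℕ => σ (k + 3) ((k + 1 - i : ℕ) : ZMod (k + 3)))).prod *
        σ (k + 3) 0 := by
    refine Commute.list_prod_right _ _ ?_
    intro g hg
    simp only [List.mem_map, List.mem_range] at hg
    obtain ⟨i, hik, rfl⟩ := hg
    refine hcomm0 _ ?_ ?_ ?_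
    · simpa using natCast_ne (n := k + 3) (a := k + 1 - i) (b := 0)
        (by omega) (by omega) (by omega)
    · simpa using natCast_ne (n := k + 3) (a := k + 1 - i) (b := 1)
        (by omega) (by omega) (by omega)
    · rw [← eneg]
      exact natCast_ne (by omega) (by omega) (by omega)
  -- decomposition of the cycle word image
  have t0 : homG (k + 3) (cycleWord (k + 3)) =
      ((List.range (k + 3)).map (fun i : ℕ => σ (k + 3) ((i : ZMod (k + 3))))).prod *
      ((List.range (k + 1)).map
        (fun i : ℕ => σ (k + 3) ((k + 1 - i : ℕ) : ZMod (k + 3)))).prod := by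
    rw [cycleWord, map_mul, map_list_prod, map_list_prod, List.map_map, List.map_map,
      coe_list_range, List.map_map]
    rfl
  have tA1 : ((List.range (k + 3)).map (fun i : ℕ => σ (k + 3) ((i : ZMod (k + 3))))).prod
      = ((List.range (k + 2)).map (fun i : ℕ => σ (k + 3) ((i : ZMod (k + 3))))).prod *
        σ (k + 3) ((k + 2 : ℕ) : ZMod (k + 3)) :=
    List.prod_range_succ _ (k + 2)
  have tA2 : ((List.range (k + 2)).map (fun i : ℕ => σ (k + 3) ((i : ZMod (k + 3))))).prod
      = σ (k + 3) ((0 : ℕ) : ZMod (k + 3)) *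
        ((List.range (k + 1)).map
          (fun i : ℕ => σ (k + 3) ((i + 1 : ℕ) : ZMod (k + 3)))).prod :=
    List.prod_range_succ' _ (k + 1)
  have tA3 : ((List.range (k + 1)).map
        (fun i : ℕ => σ (k + 3) ((i + 1 : ℕ) : ZMod (k + 3)))).prod
      = σ (k + 3) ((1 : ℕ) : ZMod (k + 3)) *
        ((List.range k).map (fun i : ℕ => σ (k + 3) ((i + 2 : ℕ) : ZMod (k + 3)))).prod :=
    List.prod_range_succ' _ k
  have tB : ((List.range (k + 1)).map
        (fun i : ℕ => σ (k + 3) ((k + 1 - i : ℕ) : ZMod (k + 3)))).prod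
      = ((List.range k).map
          (fun i : ℕ => σ (k + 3) ((k + 1 - i : ℕ) : ZMod (k + 3)))).prod *
        σ (k + 3) ((k + 1 - k : ℕ) : ZMod (k + 3)) :=
    List.prod_range_succ _ k
  have hc := cyc_rel (m := k + 3)
  rw [t0, tA1, tA2, tA3, tB, show k + 1 - k = 1 from by omega] at hc
  simp only [Nat.cast_zero, Nat.cast_one] at hc
  have hw : (σ (k + 3) 0 * (σ (k + 3) 1 *
      (((List.range k).map (fun i : ℕ => σ (k + 3) ((i + 2 : ℕ) : ZMod (k + 3)))).prod *
      (σ (k + 3) ((k + 2 : ℕ) : ZMod (k + 3)) *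
      (((List.range k).map
        (fun i : ℕ => σ (k + 3) ((k + 1 - i : ℕ) : ZMod (k + 3)))).prod *
        σ (k + 3) 1))))) ^ 2 = 1 := by
    rw [pow_two]
    simp only [mul_assoc]
    simp only [mul_assoc] at hc
    exact hc
  -- decomposition of the goal
  have tA1' : ((List.range (k + 3)).map
        (fun i : ℕ => σ (k + 3) ((i : ZMod (k + 3)) + 1))).prod
      = ((List.range (k + 2)).map
          (fun i : ℕ => σ (k + 3) ((i : ZMod (k + 3)) + 1))).prod *
        σ (k + 3) (((k + 2 : ℕ) : ZMod (k + 3)) + 1) :=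
    List.prod_range_succ _ (k + 2)
  have tA2' : ((List.range (k + 2)).map
        (fun i : ℕ => σ (k + 3) ((i : ZMod (k + 3)) + 1))).prod
      = ((List.range (k + 1)).map
          (fun i : ℕ => σ (k + 3) ((i : ZMod (k + 3)) + 1))).prod *
        σ (k + 3) (((k + 1 : ℕ) : ZMod (k + 3)) + 1) :=
    List.prod_range_succ _ (k + 1)
  have tA3' : ((List.range (k + 1)).map
        (fun i : ℕ => σ (k + 3) ((i : ZMod (k + 3)) + 1))).prod
      = σ (k + 3) (((0 : ℕ) : ZMod (k + 3)) + 1) *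
        ((List.range k).map
          (fun i : ℕ => σ (k + 3) (((i + 1 : ℕ) : ZMod (k + 3)) + 1))).prod :=
    List.prod_range_succ' _ k
  have emid : (List.range k).map
        (fun i : ℕ => σ (k + 3) (((i + 1 : ℕ) : ZMod (k + 3)) + 1))
      = (List.range k).map (fun i : ℕ => σ (k + 3) ((i + 2 : ℕ) : ZMod (k + 3))) :=
    List.map_congr_left (fun i _ => by
      rw [show ((i + 1 : ℕ) : ZMod (k + 3)) + 1 = ((i + 2 : ℕ) : ZMod (k + 3)) from by
        push_cast; ring])
  have tB' : ((List.range (k + 1)).map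
        (fun i : ℕ => σ (k + 3) (((k + 1 - i : ℕ) : ZMod (k + 3)) + 1))).prod
      = σ (k + 3) (((k + 1 : ℕ) : ZMod (k + 3)) + 1) *
        ((List.range k).map
          (fun i : ℕ => σ (k + 3) (((k + 1 - (i + 1) : ℕ) : ZMod (k + 3)) + 1))).prod :=
    List.prod_range_succ' _ k
  have emid2 : (List.range k).map
        (fun i : ℕ => σ (k + 3) (((k + 1 - (i + 1) : ℕ) : ZMod (k + 3)) + 1))
      = (List.range k).map (fun i : ℕ => σ (k + 3) ((k + 1 - i : ℕ) : ZMod (k + 3))) :=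
    List.map_congr_left (fun i hi => by
      have hik : i < k := List.mem_range.mp hi
      have e : k + 1 - (i + 1) = k - i := by omega
      have e2 : k + 1 - i = (k - i) + 1 := by omega
      rw [e, e2, Nat.cast_add, Nat.cast_one])
  rw [tA1', tA2', tA3', tB', emid, emid2, e01, e12, e20]
  -- now apply key_alg
  have KK := key_alg (σ (k + 3) 0) (σ (k + 3) 1) (σ (k + 3) ((k + 2 : ℕ) : ZMod (k + 3)))
    (((List.range k).map (fun i : ℕ => σ (k + 3) ((i + 2 : ℕ) : ZMod (k + 3)))).prod)
    (((List.range k).map (fun i : ℕ => σ (k + 3) ((k + 1 - i : ℕ) : ZMod (k + 3)))).prod)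
    hy hz b1 b2 cM cN hw
  rw [pow_two] at KK ⊢
  simp only [mul_assoc] at KK ⊢
  exact KK


end CycleRelation
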